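/- Let F be a finite extension of ℚ_p and k a field of characteristic p. Every finite-dimensional smooth representation of SL_n(F) over k (n ≥ 2) is trivial. -/

import Mathlib

open Matrix

private theorem SLsm_weyl {n : Type*} [DecidableEq n] [Fintype n] {F : Type*} [Field F]
    (i j : n) (h : i ≠ j) (a : F) (ha : a ≠ 0) :
    transvection i j a * transvection j i (-a⁻¹) * transvection i j a =
      1 + Matrix.single i i (-1) + Matrix.single j j (-1) + Matrix.single i j a
        + Matrix.single j i (-a⁻¹) := by
  simp only [transvection, mul_add, add_mul, mul_one, one_mul, mul_neg, neg_mul,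
    Matrix.single_mul_single_same, single_mul_single_of_ne a i j i h.symm,
    single_mul_single_of_ne (-a⁻¹) j i j h,
    mul_inv_cancel₀ ha, inv_mul_cancel₀ ha, neg_neg, neg_zero, add_zero, zero_add]
  ext r s
  simp only [Matrix.add_apply, Matrix.one_apply, Matrix.single, Matrix.of_apply]
  split_ifs <;> (try casesm* _ ∧ _) <;> subst_vars <;>
    first | rfl | (exfalso; simp_all; done) | ring | simp_all

private theorem SLsm_six {n : Type*} [DecidableEq n] [Fintype n] {F : Type*} [Field F]
    (i j : n) (h : i ≠ j) (a : F) (ha : a ≠ 0) :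
    transvection i j a * transvection j i (-a⁻¹) * transvection i j a *
      (transvection i j (-1) * transvection j i 1 * transvection i j (-1)) =
      diagonal (fun l => if l = i then a else if l = j then a⁻¹ else 1) := by
  have h2 := SLsm_weyl i j h (-1 : F) (by norm_num)
  norm_num at h2
  rw [SLsm_weyl i j h a ha, h2]
  simp only [mul_add, add_mul, mul_one, one_mul, mul_neg, neg_mul,
    Matrix.single_mul_single_same,
    single_mul_single_of_ne (-1 : F) i i j h,
    single_mul_single_of_ne (-1 : F) j j i h.symm,
    single_mul_single_of_ne a i j i h.symm,
    single_mul_single_of_ne (-a⁻¹) j i j h,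
    neg_neg, neg_zero, add_zero, zero_add]
  clear h2
  ext r s
  simp only [Matrix.add_apply, Matrix.one_apply, Matrix.single, Matrix.of_apply,
    Matrix.diagonal_apply]
  split_ifs <;> (try casesm* _ ∧ _) <;> subst_vars <;>
    first | rfl | (exfalso; simp_all; done) | ring | simp_all

private theorem SLsm_transvection_pow {n : Type*} [DecidableEq n] [Fintype n] {F : Type*}
    [Field F] (i j : n) (h : i ≠ j) (c : F) (m : ℕ) :
    transvection i j c ^ m = transvection i j ((m : F) * c) := by
  induction m with
  | zero => simp
  | succ m ih =>
      rw [pow_succ, ih, transvection_mul_transvection_same i j h]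
      congr 1
      push_cast
      ring

private theorem SLsm_pow_finrank {K V : Type*} [Field K] [AddCommGroup V] [Module K V]
    [FiniteDimensional K V] (N : Module.End K V) (h : IsNilpotent N) :
    N ^ Module.finrank K V = 0 := by
  have h2 := LinearMap.aeval_self_charpoly N
  rw [h.charpoly_eq_X_pow_finrank, map_pow, Polynomial.aeval_X] at h2
  exact h2

/-- Every finite-dimensional smooth representation of `SL_n(F)` over a field `k` of
characteristic `p` is trivial, where `F` is a finite extension of `ℚ_p` (and `n ≥ 2`).
Here `SL_n(F)` carries the topology induced from the space of matrices, and smoothness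
means that the kernel of the representation is open. -/
theorem smooth_fd_rep_SL_trivial (p : ℕ) [Fact p.Prime] (F : Type*) [NormedField F]
    [Algebra ℚ_[p] F] [FiniteDimensional ℚ_[p] F] (hp : ‖(p : F)‖ < 1)
    (k : Type*) [Field k] [CharP k p] (n : ℕ) (hn : 2 ≤ n)
    (V : Type*) [AddCommGroup V] [Module k V] [FiniteDimensional k V]
    (φ : Matrix.SpecialLinearGroup (Fin n) F →* (V ≃ₗ[k] V))
    (hker : @IsOpen (Matrix.SpecialLinearGroup (Fin n) F)
      (TopologicalSpace.induced (fun g => (g : Matrix (Fin n) (Fin n) F)) inferInstance)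
      {g | φ g = 1}) :
    ∀ g, φ g = 1 := by
  intro g
  classical
  rcases subsingleton_or_nontrivial V with hV | hV
  · ext v
    exact Subsingleton.elim _ _
  obtain ⟨v0, hv0⟩ := exists_ne (0 : V)
  haveI : CharP (Module.End k V) p := by
    refine charP_of_injective_algebraMap (R := k) (A := Module.End k V) (fun a b hab => ?_) p
    have h2 := congrArg (fun f : Module.End k V => f v0) hab
    simp only [Module.algebraMap_end_apply] at h2
    exact smul_left_injective k hv0 h2
  haveI : CharZero F := charZero_of_injective_algebraMap (algebraMap ℚ_[p] F).injective
  have hp1 : 1 < p := (Fact.out : p.Prime).one_lt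
  have hpF : ((p : F)) ≠ 0 := Nat.cast_ne_zero.mpr (Fact.out : p.Prime).ne_zero
  obtain ⟨U, hU, hUpre⟩ := isOpen_induced_iff.mp hker
  set dR := Module.finrank k V with hdR
  have hdle : dR ≤ p ^ dR := (Nat.lt_pow_self (n := dR) hp1).le
  set Tsl : ∀ (i j : Fin n), i ≠ j → F → Matrix.SpecialLinearGroup (Fin n) F :=
    fun i j hij t => ⟨transvection i j t, det_transvection_of_ne i j hij t⟩ with hTsl
  -- Step A: all transvections lie in the kernel
  have hT : ∀ (i j : Fin n) (hij : i ≠ j) (t : F), φ (Tsl i j hij t) = 1 := by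
    intro i j hij
    have hcont : Continuous (fun t : F => transvection i j t) := by
      apply continuous_matrix
      intro a b
      simp only [transvection, Matrix.add_apply, Matrix.single, Matrix.of_apply]
      apply Continuous.add continuous_const
      by_cases hab : i = a ∧ j = b
      · simpa only [hab, and_self, if_true] using continuous_id'
      · simpa only [hab, if_false] using continuous_const
    have hopen : IsOpen {t : F | φ (Tsl i j hij t) = 1} := by
      have heq : {t : F | φ (Tsl i j hij t) = 1} = (fun t => transvection i j t) ⁻¹' U := by
        ext t
        exact (Set.ext_iff.mp hUpre (Tsl i j hij t)).symm
      rw [heq]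
      exact hU.preimage hcont
    have h0 : (0 : F) ∈ {t : F | φ (Tsl i j hij t) = 1} := by
      have hT0 : Tsl i j hij 0 = 1 := Subtype.ext (by simp [hTsl])
      simp only [Set.mem_setOf_eq, hT0]
      exact _root_.map_one φ
    obtain ⟨ε, hε, hball⟩ := Metric.isOpen_iff.mp hopen 0 h0
    have hTpow : ∀ (t : F) (m : ℕ), Tsl i j hij t ^ m = Tsl i j hij ((m : F) * t) := by
      intro t m
      apply Subtype.ext
      rw [Matrix.SpecialLinearGroup.coe_pow]
      exact SLsm_transvection_pow i j hij t m
    have hsmall : ∀ s : F, ∃ m : ℕ, φ (Tsl i j hij ((p : F) ^ m * s)) = 1 := by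
      intro s
      obtain ⟨m, hm⟩ := exists_pow_lt_of_lt_one (x := ε / (‖s‖ + 1))
        (by positivity) hp
      refine ⟨m, hball ?_⟩
      simp only [Metric.mem_ball, dist_zero_right]
      have hm' : ‖(p : F)‖ ^ m * (‖s‖ + 1) < ε :=
        (lt_div_iff₀ (by positivity)).mp hm
      have h1 : ‖(p : F) ^ m * s‖ = ‖(p : F)‖ ^ m * ‖s‖ := by
        rw [norm_mul, norm_pow]
      rw [h1]
      nlinarith [norm_nonneg s, pow_nonneg (norm_nonneg ((p : F))) m]
    have hunip : ∀ s : F,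
        IsNilpotent (((φ (Tsl i j hij s) : V →ₗ[k] V) : Module.End k V) - 1) := by
      intro s
      obtain ⟨m, hm⟩ := hsmall s
      have hpow : φ (Tsl i j hij s) ^ (p ^ m) = 1 := by
        rw [← _root_.map_pow, hTpow]
        rw [show (((p ^ m : ℕ) : F)) = (p : F) ^ m by push_cast; ring]
        exact hm
      have hA : ((φ (Tsl i j hij s) : V →ₗ[k] V) : Module.End k V) ^ (p ^ m) = 1 := by
        ext v
        have h3 := congrArg (fun e : V ≃ₗ[k] V => e v) hpow
        simpa [LinearEquiv.pow_apply, Module.End.pow_apply, LinearEquiv.coe_coe] using h3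
      refine ⟨p ^ m, ?_⟩
      have hc : Commute ((φ (Tsl i j hij s) : V →ₗ[k] V) : Module.End k V) 1 :=
        Commute.one_right _
      rw [sub_pow_char_pow_of_commute _ _ hc, hA, one_pow, sub_self]
    intro t
    have ht : t = ((p ^ dR : ℕ) : F) * (t / (p : F) ^ dR) := by
      push_cast
      field_simp
    set s := t / (p : F) ^ dR with hs
    set A : Module.End k V := ((φ (Tsl i j hij s) : V →ₗ[k] V) : Module.End k V) with hA
    have hN : (A - 1) ^ dR = 0 := SLsm_pow_finrank (A - 1) (hunip s)
    have hNP : (A - 1) ^ (p ^ dR) = 0 := by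
      rw [show p ^ dR = dR + (p ^ dR - dR) by omega, pow_add, hN, zero_mul]
    have hA1 : A ^ (p ^ dR) = 1 := by
      have h4 := sub_pow_char_pow_of_commute (p := p) (n := dR) (Commute.one_right A)
      rw [hNP, one_pow] at h4
      exact sub_eq_zero.mp h4.symm
    have hu1 : φ (Tsl i j hij s) ^ (p ^ dR) = 1 := by
      ext v
      have h5 := congrArg (fun f : Module.End k V => f v) hA1
      simpa [hA, LinearEquiv.pow_apply, Module.End.pow_apply, LinearEquiv.coe_coe] using h5
    rw [ht, ← hTpow, _root_.map_pow, hu1]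
  -- Step B: the special diagonal matrices lie in the kernel
  have hD6 : ∀ (i j : Fin n) (hij : i ≠ j) (a : F), a ≠ 0 →
      ∃ Q : Matrix.SpecialLinearGroup (Fin n) F,
        (Q : Matrix (Fin n) (Fin n) F) =
          diagonal (fun l => if l = i then a else if l = j then a⁻¹ else 1) ∧ φ Q = 1 := by
    intro i j hij a ha
    refine ⟨Tsl i j hij a * Tsl j i hij.symm (-a⁻¹) * Tsl i j hij a *
      (Tsl i j hij (-1) * Tsl j i hij.symm 1 * Tsl i j hij (-1)), ?_, ?_⟩
    · simp only [Matrix.SpecialLinearGroup.coe_mul, hTsl]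
      exact SLsm_six i j hij a ha
    · simp only [_root_.map_mul, hT i j hij, hT j i hij.symm, one_mul, mul_one]
  -- Step C: diagonal matrices of determinant one lie in the kernel
  have hDiag : ∀ (N : ℕ) (dv : Fin n → F), ∏ l, dv l = 1 →
      (Finset.univ.filter fun l => dv l ≠ 1).card ≤ N →
      ∀ P : Matrix.SpecialLinearGroup (Fin n) F,
        (P : Matrix (Fin n) (Fin n) F) = diagonal dv → φ P = 1 := by
    intro N
    induction N with
    | zero =>
        intro dv h1 hcard P hP
        have hall : ∀ l, dv l = 1 := by
          intro l
          by_contra hl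
          have : l ∈ Finset.univ.filter fun l => dv l ≠ 1 := by
            simp [hl]
          have := Finset.card_pos.mpr ⟨l, this⟩
          omega
        have hP1 : P = 1 := by
          apply Subtype.ext
          rw [hP]
          have : dv = fun _ => (1 : F) := funext hall
          rw [this]
          simp
        rw [hP1, _root_.map_one]
    | succ N ih =>
        intro dv h1 hcard P hP
        by_cases hall : ∀ l, dv l = 1
        · have hP1 : P = 1 := by
            apply Subtype.ext
            rw [hP]
            have : dv = fun _ => (1 : F) := funext hall
            rw [this]
            simp
          rw [hP1, _root_.map_one]
        push_neg at hall
        obtain ⟨i, hi⟩ := hall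
        have hex : ∃ j, j ≠ i ∧ dv j ≠ 1 := by
          by_contra hno
          push_neg at hno
          have h2 : ∏ l, dv l = dv i :=
            Finset.prod_eq_single i (fun b _ hb => hno b hb) (by simp)
          exact hi (h2 ▸ h1)
        obtain ⟨j, hji, hj⟩ := hex
        have hdvne : ∀ l, dv l ≠ 0 := by
          intro l hl
          apply (one_ne_zero (α := F))
          rw [← h1]
          exact Finset.prod_eq_zero (Finset.mem_univ l) hl
        set dv' : Fin n → F :=
          fun l => if l = i then 1 else if l = j then dv i * dv j else dv l with hdv'
        have hupdate : dv' = Function.update (Function.update dv j (dv i * dv j)) i 1 := by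
          funext l
          simp only [hdv', Function.update_apply]
        have hprod_dv : ∏ l, dv l = dv i * (dv j * ∏ l ∈ (Finset.univ \ {i}) \ {j}, dv l) := by
          rw [Finset.prod_eq_mul_prod_sdiff_singleton_of_mem (Finset.mem_univ i),
            Finset.prod_eq_mul_prod_sdiff_singleton_of_mem
              (show j ∈ Finset.univ \ {i} by simp [hji])]
        have h1' : ∏ l, dv' l = 1 := by
          rw [hupdate, Finset.prod_update_of_mem (Finset.mem_univ i), one_mul,
            Finset.prod_update_of_mem (show j ∈ Finset.univ \ {i} by simp [hji])]
          rw [hprod_dv, ← mul_assoc] at h1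
          exact h1
        have hifilter : i ∈ Finset.univ.filter (fun l => dv l ≠ 1) := by simp [hi]
        have hsub : (Finset.univ.filter fun l => dv' l ≠ 1) ⊆
            (Finset.univ.filter fun l => dv l ≠ 1).erase i := by
          intro l hl
          simp only [Finset.mem_filter, Finset.mem_univ, true_and, hdv'] at hl
          rcases eq_or_ne l i with rfl | hli
          · simp at hl
          rcases eq_or_ne l j with rfl | hlj
          · exact Finset.mem_erase.mpr ⟨hli, by simp [hj]⟩
          · rw [if_neg hli, if_neg hlj] at hl
            exact Finset.mem_erase.mpr ⟨hli, by simp [hl]⟩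
        have hcard' : (Finset.univ.filter fun l => dv' l ≠ 1).card ≤ N := by
          have h6 := Finset.card_le_card hsub
          rw [Finset.card_erase_of_mem hifilter] at h6
          omega
        obtain ⟨Q, hQcoe, hQ1⟩ := hD6 i j hji.symm (dv i) (hdvne i)
        have hfun : (fun l => (if l = i then dv i else if l = j then (dv i)⁻¹ else 1) * dv' l)
            = dv := by
          funext l
          by_cases hli : l = i
          · simp [hdv', hli]
          · by_cases hlj : l = j
            · simp [hdv', hli, hlj, hji, inv_mul_cancel_left₀ (hdvne i)]
            · simp [hdv', hli, hlj]
        have hkey : diagonal dv = (Q : Matrix (Fin n) (Fin n) F) * diagonal dv' := by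
          rw [hQcoe, diagonal_mul_diagonal, hfun]
        have hPeq : P = Q * id (α := Matrix.SpecialLinearGroup (Fin n) F) ⟨diagonal dv', by rw [det_diagonal]; exact h1'⟩ := by
          apply Subtype.ext
          rw [Matrix.SpecialLinearGroup.coe_mul, hP, hkey]
          rfl
        rw [hPeq, _root_.map_mul, hQ1, one_mul]
        exact ih dv' h1' hcard' _ rfl
  -- Step D: conclusion via the transvection decomposition
  obtain ⟨L, L', dv, hg⟩ :=
    Pivot.exists_list_transvec_mul_diagonal_mul_list_transvec
      (g : Matrix (Fin n) (Fin n) F)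
  have hLdet : ∀ L : List (TransvectionStruct (Fin n) F),
      ((L.map TransvectionStruct.toMatrix).prod).det = 1 := by
    intro L
    induction L with
    | nil => simp
    | cons t L ih => simp [det_mul, ih, t.det]
  have hdet_dv : (diagonal dv).det = 1 := by
    have h7 := congrArg det hg
    rw [g.prop] at h7
    rw [det_mul, det_mul, hLdet, hLdet, one_mul, mul_one] at h7
    exact h7.symm
  set fsl : TransvectionStruct (Fin n) F → Matrix.SpecialLinearGroup (Fin n) F :=
    fun t => ⟨t.toMatrix, t.det⟩ with hfsl
  have hfsl_coe : ∀ L : List (TransvectionStruct (Fin n) F),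
      (((L.map fsl).prod : Matrix.SpecialLinearGroup (Fin n) F) : Matrix (Fin n) (Fin n) F)
        = (L.map TransvectionStruct.toMatrix).prod := by
    intro L
    induction L with
    | nil => simp
    | cons t L ih =>
        simp only [List.map_cons, List.prod_cons, Matrix.SpecialLinearGroup.coe_mul, ih]
        rfl
  have hfsl1 : ∀ t : TransvectionStruct (Fin n) F, φ (fsl t) = 1 := by
    intro t
    rcases t with ⟨ti, tj, hij, c⟩
    exact hT ti tj hij c
  have hprod1 : ∀ L : List (TransvectionStruct (Fin n) F), φ ((L.map fsl).prod) = 1 := by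
    intro L
    induction L with
    | nil => simp
    | cons t L ih =>
        rw [List.map_cons, List.prod_cons, _root_.map_mul, hfsl1, ih, one_mul]
  have hPdiag : φ (id (α := Matrix.SpecialLinearGroup (Fin n) F) ⟨diagonal dv, hdet_dv⟩) = 1 := by
    refine hDiag (Finset.univ.filter fun l => dv l ≠ 1).card dv ?_ le_rfl _ rfl
    rw [det_diagonal] at hdet_dv
    exact hdet_dv
  have hgeq : g = (L.map fsl).prod * id (α := Matrix.SpecialLinearGroup (Fin n) F) ⟨diagonal dv, hdet_dv⟩ * (L'.map fsl).prod := by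
    apply Subtype.ext
    rw [Matrix.SpecialLinearGroup.coe_mul, Matrix.SpecialLinearGroup.coe_mul,
      hfsl_coe, hfsl_coe]
    exact hg
  rw [hgeq, _root_.map_mul, _root_.map_mul, hprod1, hPdiag, hprod1, one_mul, one_mul]
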